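/- arXiv:0902.2690 — 7 statements merged into one kernel-verified Lean document; each statement's English description precedes it below -/
import Mathlib

section
/- Let (X, μ) be a measure space, let f ∈ L²(X, μ) be nonzero, and let E > 0. Let G : (0,∞) → [0,∞) be nondecreasing, and define G⁻¹(y) := sup{λ > 0 : G(λ) ≤ y} ∈ [0,∞] (with sup ∅ = 0) and H(y) := y · G⁻¹(y). Suppose that for every λ > 0 there exist g_λ, h_λ ∈ L²(X, μ) with f = g_λ + h_λ almost everywhere, ‖g_λ‖_{L^∞}² ≤ G(λ) · E, and that λ ↦ ‖h_λ‖_{L²}² is measurable with ∫₀^∞ ‖h_λ‖_{L²}² dλ ≤ E. Then ∫_X H(|f(x)|² / (4E)) dμ(x) ≤ 1 (the integral taken in the extended sense with values in [0,∞]). -/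
/-!
Where `G λ · E ≤ ‖f x‖² / 4`, the bound `‖g_λ‖_∞² ≤ G λ · E` forces `‖h_λ x‖ ≥ ‖f x‖ / 2`, so
`‖f x‖² / 4 ≤ ‖h_λ x‖²`. Integrate this over the set of such pairs `(x, λ)` with `λ > 0` and swap
the integrals (Tonelli): since `G` is monotone, the `λ`-section at `x` has length
`G⁻¹(‖f x‖² / (4E))`, whence `E · ∫ H(‖f‖² / (4E)) dμ ≤ ∫₀^∞ ‖h_λ‖₂² dλ ≤ E`. Tonelli needs
σ-finiteness, which `μ` has on the part of `X` carrying `f ∈ L²`.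
-/

open MeasureTheory Set ENNReal

section Sublevel

variable {K : ℝ → ℝ}

theorem volume_pos_sublevel_eq_sSup (hK : MonotoneOn K (Ioi 0)) (y : ℝ) :
    volume {l | 0 < l ∧ K l ≤ y} =
      sSup {t : ℝ≥0∞ | ∃ l : ℝ, 0 < l ∧ K l ≤ y ∧ t = ENNReal.ofReal l} := by
  set s := sSup {t : ℝ≥0∞ | ∃ l : ℝ, 0 < l ∧ K l ≤ y ∧ t = ENNReal.ofReal l}
  apply le_antisymm
  · rcases eq_top_or_lt_top s with hs | hs
    · exact hs ▸ le_top
    have hsub : {l | 0 < l ∧ K l ≤ y} ⊆ Ioc 0 s.toReal := fun l hl =>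
      ⟨hl.1, (ENNReal.ofReal_le_iff_le_toReal hs.ne).1 (le_sSup ⟨l, hl.1, hl.2, rfl⟩)⟩
    calc volume {l | 0 < l ∧ K l ≤ y} ≤ volume (Ioc 0 s.toReal) := measure_mono hsub
      _ = s := by rw [Real.volume_Ioc, sub_zero, ENNReal.ofReal_toReal hs.ne]
  · refine sSup_le ?_
    rintro _ ⟨l, hl, hly, rfl⟩
    calc ENNReal.ofReal l = volume (Ioo 0 l) := by rw [Real.volume_Ioo, sub_zero]
      _ ≤ volume {l | 0 < l ∧ K l ≤ y} :=
        measure_mono fun m hm => ⟨hm.1, (hK hm.1 hl hm.2.le).trans hly⟩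

theorem measurableSet_pos_sublevel {α : Type*} [MeasurableSpace α] (hK : MonotoneOn K (Ioi 0))
    {c : α → ℝ} (hc : Measurable c) :
    MeasurableSet {p : α × ℝ | 0 < p.2 ∧ K p.2 ≤ c p.1} := by
  -- `⊥` below `0` extends `K` monotonically without any lower bound on `K`.
  let K' : ℝ → EReal := fun l => if 0 < l then (K l : EReal) else ⊥
  have hK' : Monotone K' := by
    intro a b hab
    by_cases ha : 0 < a
    · have hb : 0 < b := ha.trans_le hab
      simp only [K', if_pos ha, if_pos hb, EReal.coe_le_coe_iff]
      exact hK ha hb hab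
    · simp only [K', if_neg ha, bot_le]
  have hS : {p : α × ℝ | 0 < p.2 ∧ K p.2 ≤ c p.1} =
      {p | 0 < p.2} ∩ {p | K' p.2 ≤ (c p.1 : EReal)} := by
    ext p
    by_cases hp : 0 < p.2 <;> simp [K', hp]
  rw [hS]
  exact (measurableSet_lt measurable_const measurable_snd).inter
    (measurableSet_le (hK'.measurable.comp measurable_snd)
      (measurable_coe_real_ereal.comp (hc.comp measurable_fst)))

end Sublevel

theorem lintegral_mul_measure_prodMk_preimage {α β : Type*} [MeasurableSpace α]
    [MeasurableSpace β] {μ : Measure α} {ν : Measure β} [SFinite μ] [SFinite ν]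
    {S : Set (α × β)} (hS : MeasurableSet S) {w : α → ℝ≥0∞} (hw : Measurable w) :
    ∫⁻ x, w x * ν (Prod.mk x ⁻¹' S) ∂μ = ∫⁻ y, ∫⁻ x in (fun x => (x, y)) ⁻¹' S, w x ∂μ ∂ν := by
  calc ∫⁻ x, w x * ν (Prod.mk x ⁻¹' S) ∂μ = ∫⁻ x, ν (Prod.mk x ⁻¹' S) ∂μ.withDensity w :=
        (lintegral_withDensity_eq_lintegral_mul _ hw (measurable_measure_prodMk_left hS)).symm
    _ = (μ.withDensity w).prod ν S := (Measure.prod_apply hS).symm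
    _ = ∫⁻ y, ∫⁻ x in (fun x => (x, y)) ⁻¹' S, w x ∂μ ∂ν := by
      rw [Measure.prod_apply_symm hS]
      exact lintegral_congr fun y => withDensity_apply _ (measurable_prodMk_right hS)

theorem MeasureTheory.AEFinStronglyMeasurable.lintegral_comp_eq_setLIntegral {α β : Type*}
    [MeasurableSpace α] {μ : Measure α} [Zero β] [TopologicalSpace β] [T2Space β] {f : α → β}
    (hf : AEFinStronglyMeasurable f μ) {Φ : β → ℝ≥0∞} (hΦ : Φ 0 = 0) :
    ∫⁻ x, Φ (f x) ∂μ = ∫⁻ x in hf.sigmaFiniteSet, Φ (f x) ∂μ := by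
  have hcompl : ∫⁻ x in hf.sigmaFiniteSetᶜ, Φ (f x) ∂μ = 0 :=
    (lintegral_congr_ae (hf.ae_eq_zero_compl.mono fun x hx => by simp [hx, hΦ])).trans
      lintegral_zero
  rw [← lintegral_add_compl _ hf.measurableSet, hcompl, add_zero]

theorem eLpNorm_two_sq_eq_lintegral {α E : Type*} [MeasurableSpace α] {μ : Measure α}
    [NormedAddCommGroup E] (f : α → E) :
    eLpNorm f 2 μ ^ 2 = ∫⁻ x, ‖f x‖ₑ ^ 2 ∂μ := by
  simpa using eLpNorm_nnreal_pow_eq_lintegral (f := f) (μ := μ) (p := 2) two_ne_zero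

theorem norm_sq_div_four_le_of_eq_add {E : Type*} [SeminormedAddCommGroup E] {a b c : E}
    (habc : a = b + c) (hb : ‖b‖ ^ 2 ≤ ‖a‖ ^ 2 / 4) : ‖a‖ ^ 2 / 4 ≤ ‖c‖ ^ 2 := by
  have hb' : ‖b‖ ≤ ‖a‖ / 2 :=
    (pow_le_pow_iff_left₀ (norm_nonneg b) (by positivity) two_ne_zero).1 (by linarith)
  have hc : ‖a‖ / 2 ≤ ‖c‖ := by linarith [habc ▸ norm_add_le b c]
  nlinarith [norm_nonneg a]

section Decomposition

variable {α E : Type*} [MeasurableSpace α] {μ : Measure α} [NormedAddCommGroup E]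

theorem lintegral_indicator_le_eLpNorm_sq {f g h : α → E} (hfgh : f =ᵐ[μ] g + h) {M : ℝ}
    (hg : eLpNorm g ⊤ μ ^ 2 ≤ ENNReal.ofReal M) :
    ∫⁻ x, {x | M ≤ ‖f x‖ ^ 2 / 4}.indicator (fun x => ENNReal.ofReal (‖f x‖ ^ 2 / 4)) x ∂μ ≤
      eLpNorm h 2 μ ^ 2 := by
  rw [eLpNorm_two_sq_eq_lintegral]
  refine lintegral_mono_ae ?_
  filter_upwards [hfgh, enorm_ae_le_eLpNormEssSup g μ] with x hx hgx
  refine indicator_apply_le' (fun hM => ?_) fun _ => zero_le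
  have hgM : ENNReal.ofReal (‖g x‖ ^ 2) ≤ ENNReal.ofReal (‖f x‖ ^ 2 / 4) :=
    calc ENNReal.ofReal (‖g x‖ ^ 2) = ‖g x‖ₑ ^ 2 := by rw [ofReal_pow (norm_nonneg _), ofReal_norm]
      _ ≤ eLpNorm g ⊤ μ ^ 2 := by rw [eLpNorm_exponent_top]; gcongr
      _ ≤ ENNReal.ofReal (‖f x‖ ^ 2 / 4) := hg.trans (ofReal_le_ofReal hM)
  rw [ofReal_le_ofReal_iff (by positivity)] at hgM
  rw [← ofReal_norm, ← ofReal_pow (norm_nonneg _)]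
  exact ofReal_le_ofReal (norm_sq_div_four_le_of_eq_add (by simpa using hx) hgM)

theorem lintegral_mul_volume_sublevel_le [SFinite μ] {f : α → E} (hf : AEStronglyMeasurable f μ)
    {g h : ℝ → α → E} {K : ℝ → ℝ} (hK : MonotoneOn K (Ioi 0))
    (hfgh : ∀ l, 0 < l → f =ᵐ[μ] g l + h l)
    (hg : ∀ l, 0 < l → eLpNorm (g l) ⊤ μ ^ 2 ≤ ENNReal.ofReal (K l)) :
    ∫⁻ x, ENNReal.ofReal (‖f x‖ ^ 2 / 4) * volume {l | 0 < l ∧ K l ≤ ‖f x‖ ^ 2 / 4} ∂μ ≤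
      ∫⁻ l in Ioi 0, eLpNorm (h l) 2 μ ^ 2 := by
  obtain ⟨F, hF, hfF⟩ := hf
  have hc : Measurable fun x => ‖F x‖ ^ 2 / 4 := (hF.norm.measurable.pow_const 2).div_const 4
  set S := {p : α × ℝ | 0 < p.2 ∧ K p.2 ≤ ‖F p.1‖ ^ 2 / 4}
  have hS : MeasurableSet S := measurableSet_pos_sublevel hK hc
  calc ∫⁻ x, ENNReal.ofReal (‖f x‖ ^ 2 / 4) * volume {l | 0 < l ∧ K l ≤ ‖f x‖ ^ 2 / 4} ∂μ
      = ∫⁻ x, ENNReal.ofReal (‖F x‖ ^ 2 / 4) * volume.restrict (Ioi 0) (Prod.mk x ⁻¹' S) ∂μ := by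
        refine lintegral_congr_ae (hfF.mono fun x hx => ?_)
        have hsec : volume.restrict (Ioi 0) (Prod.mk x ⁻¹' S) = volume (Prod.mk x ⁻¹' S) :=
          Measure.restrict_eq_self _ fun l hl => hl.1
        simp only [hsec, hx]
        rfl
    _ = ∫⁻ l in Ioi 0, ∫⁻ x in (fun x => (x, l)) ⁻¹' S, ENNReal.ofReal (‖F x‖ ^ 2 / 4) ∂μ :=
        lintegral_mul_measure_prodMk_preimage hS (ENNReal.measurable_ofReal.comp hc)
    _ ≤ ∫⁻ l in Ioi 0, eLpNorm (h l) 2 μ ^ 2 := by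
        refine setLIntegral_mono' measurableSet_Ioi fun l hl => ?_
        rw [← lintegral_indicator (measurable_prodMk_right hS)]
        have hsec : (fun x => (x, l)) ⁻¹' S = {x | K l ≤ ‖F x‖ ^ 2 / 4} := by
          ext x
          simp [S, mem_Ioi.1 hl]
        rw [hsec]
        exact lintegral_indicator_le_eLpNorm_sq (hfF.symm.trans (hfgh l hl)) (hg l hl)

end Decomposition

theorem stmt_0_general {X : Type*} [MeasurableSpace X] (μ : Measure X)
    (f : X → ℝ) (hf : MemLp f 2 μ)
    (E : ℝ) (hE : 0 < E)
    (G : ℝ → ℝ)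
    (hG_mono : ∀ a b, 0 < a → a ≤ b → G a ≤ G b)
    (Ginv : ℝ → ℝ≥0∞)
    (hGinv : ∀ y, Ginv y
      = sSup {t : ℝ≥0∞ | ∃ l : ℝ, 0 < l ∧ G l ≤ y ∧ t = ENNReal.ofReal l})
    (H : ℝ → ℝ≥0∞) (hH : ∀ y, H y = ENNReal.ofReal y * Ginv y)
    (g h : ℝ → X → ℝ)
    (h_dec : ∀ l, 0 < l → MemLp (g l) 2 μ ∧ MemLp (h l) 2 μ ∧
      f =ᵐ[μ] g l + h l ∧ (eLpNorm (g l) ⊤ μ) ^ 2 ≤ ENNReal.ofReal (G l * E))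
    (h_int : ∫⁻ l in Ioi (0 : ℝ), (eLpNorm (h l) 2 μ) ^ 2 ≤ ENNReal.ofReal E) :
    ∫⁻ x, H (‖f x‖ ^ 2 / (4 * E)) ∂μ ≤ 1 := by
  have hfin := hf.aefinStronglyMeasurable two_ne_zero ofNat_ne_top
  have hG : MonotoneOn G (Ioi 0) := fun a ha b _ hab => hG_mono a b ha hab
  have hGE : MonotoneOn (fun l => G l * E) (Ioi 0) := fun a ha b hb hab =>
    mul_le_mul_of_nonneg_right (hG ha hb hab) hE.le
  have hEH : ∀ y, ENNReal.ofReal E * H (y / (4 * E)) =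
      ENNReal.ofReal (y / 4) * volume {l | 0 < l ∧ G l * E ≤ y / 4} := by
    intro y
    have hset : {l | 0 < l ∧ G l * E ≤ y / 4} = {l | 0 < l ∧ G l ≤ y / (4 * E)} := by
      ext l
      exact and_congr_right fun _ => by rw [← le_div_iff₀ hE, div_div, mul_comm 4 E]
    rw [hH, hGinv, hset, volume_pos_sublevel_eq_sSup hG, ← mul_assoc, ← ofReal_mul hE.le]
    congr 2
    field_simp
  have hbound := lintegral_mul_volume_sublevel_le (μ := μ.restrict hfin.sigmaFiniteSet)
    hf.aestronglyMeasurable.restrict hGE (fun l hl => ae_restrict_of_ae (h_dec l hl).2.2.1)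
    fun l hl => le_trans (by gcongr; exact Measure.restrict_le_self) (h_dec l hl).2.2.2
  rw [hfin.lintegral_comp_eq_setLIntegral (Φ := fun v => H (‖v‖ ^ 2 / (4 * E))) (by simp [hH]),
    ← ENNReal.mul_le_mul_iff_right (by simpa using hE) ofReal_ne_top, mul_one,
    ← lintegral_const_mul' _ _ ofReal_ne_top]
  simp_rw [hEH]
  calc _ ≤ _ := hbound
    _ ≤ ∫⁻ l in Ioi 0, eLpNorm (h l) 2 μ ^ 2 :=
      lintegral_mono fun l => by gcongr; exact Measure.restrict_le_self
    _ ≤ ENNReal.ofReal E := h_int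

/-- analytic core of Theorem 1.1, Sobolev–Orlicz inequality.
Given a spectral-type decomposition `f = g λ + h λ` with `‖g λ‖_∞² ≤ G(λ)·E` and
`∫₀^∞ ‖h λ‖₂² dλ ≤ E`, one has `∫_X H(|f|²/(4E)) dμ ≤ 1` where `H(y) = y·G⁻¹(y)`
and `G⁻¹(y) = sup {λ > 0 | G λ ≤ y}` (computed in `[0,∞]`, with `sup ∅ = 0`). -/
theorem stmt_0 {X : Type*} [MeasurableSpace X] (μ : Measure X)
    (f : X → ℝ) (hf : MemLp f 2 μ) (hf_ne : ¬ f =ᵐ[μ] 0)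
    (E : ℝ) (hE : 0 < E)
    (G : ℝ → ℝ) (hG_nonneg : ∀ l, 0 < l → 0 ≤ G l)
    (hG_mono : ∀ a b, 0 < a → a ≤ b → G a ≤ G b)
    (Ginv : ℝ → ℝ≥0∞)
    (hGinv : ∀ y, Ginv y
      = sSup {t : ℝ≥0∞ | ∃ l : ℝ, 0 < l ∧ G l ≤ y ∧ t = ENNReal.ofReal l})
    (H : ℝ → ℝ≥0∞) (hH : ∀ y, H y = ENNReal.ofReal y * Ginv y)
    (g h : ℝ → X → ℝ)
    (h_dec : ∀ l, 0 < l → MemLp (g l) 2 μ ∧ MemLp (h l) 2 μ ∧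
      f =ᵐ[μ] g l + h l ∧ (eLpNorm (g l) ⊤ μ) ^ 2 ≤ ENNReal.ofReal (G l * E))
    (h_meas : Measurable fun l : ℝ => (eLpNorm (h l) 2 μ) ^ 2)
    (h_int : ∫⁻ l in Ioi (0 : ℝ), (eLpNorm (h l) 2 μ) ^ 2 ≤ ENNReal.ofReal E) :
    ∫⁻ x, H (‖f x‖ ^ 2 / (4 * E)) ∂μ ≤ 1 :=
  stmt_0_general μ f hf E hE G hG_mono Ginv hGinv H hH g h h_dec h_int
end

section
/- Let (X, μ) be a measure space, let f ∈ L¹(X, μ) ∩ L²(X, μ) be nonzero, and let E > 0. Let F : (0,∞) → [0,∞) be nondecreasing, and define F⁻¹(y) := sup{λ > 0 : F(λ) ≤ y} ∈ [0,∞] (with sup ∅ = 0). Suppose that for every λ > 0 there exist g_λ, h_λ ∈ L²(X, μ) with f = g_λ + h_λ almost everywhere, ‖g_λ‖_{L^∞} ≤ F(λ) · ‖f‖_{L¹}, and that λ ↦ ‖h_λ‖_{L²}² is measurable with ∫₀^∞ ‖h_λ‖_{L²}² dλ ≤ E. Then ∫_X |f(x)|² · F⁻¹(|f(x)| / (2‖f‖_{L¹}))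 dμ(x) ≤ 4E (the integral taken in the extended sense). -/
/-!
If `ofReal λ < F⁻¹(|f x| / (2‖f‖₁))` then `F λ · ‖f‖₁ ≤ |f x| / 2`, so the bound on `‖g_λ‖_∞`
gives `|g_λ x| ≤ |f x| / 2` and hence `|f x|² ≤ 4 |h_λ x|²` for almost every such `x`. Integrating
this over `λ > 0` and `x` and exchanging the integrals (Tonelli, on the σ-finite set carrying the
integrable `f`) turns the left-hand side into `∫ |f|² F⁻¹(|f| / (2‖f‖₁))` and the right-hand side
into `4 ∫₀^∞ ‖h_λ‖₂² dλ ≤ 4E`.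
-/

open MeasureTheory Set ENNReal

noncomputable def generalizedInverse (F : ℝ → ℝ) (y : ℝ) : ℝ≥0∞ :=
  sSup {t : ℝ≥0∞ | ∃ l : ℝ, 0 < l ∧ F l ≤ y ∧ t = ENNReal.ofReal l}

theorem monotone_generalizedInverse (F : ℝ → ℝ) : Monotone (generalizedInverse F) :=
  fun _ _ hab => sSup_le_sSup fun _ ⟨l, hl, hFl, ht⟩ => ⟨l, hl, hFl.trans hab, ht⟩

theorem le_of_ofReal_lt_generalizedInverse {F : ℝ → ℝ} (hF : MonotoneOn F (Ioi 0)) {l y : ℝ}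
    (hl : 0 < l) (h : ENNReal.ofReal l < generalizedInverse F y) : F l ≤ y := by
  obtain ⟨_, ⟨l', hl', hFl', rfl⟩, hll'⟩ := lt_sSup_iff.mp h
  exact (hF hl hl' ((ofReal_lt_ofReal_iff hl').mp hll').le).trans hFl'

theorem volume_ofReal_lt_inter_Ioi (t : ℝ≥0∞) :
    volume ({l : ℝ | ENNReal.ofReal l < t} ∩ Ioi 0) = t := by
  rcases eq_or_ne t ⊤ with rfl | ht
  · simp [Real.volume_Ioi]
  · have : {l : ℝ | ENNReal.ofReal l < t} ∩ Ioi 0 = Ioo 0 t.toReal := by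
      ext l
      rw [mem_inter_iff, and_comm, mem_Ioo]
      exact and_congr_right fun hl => ofReal_lt_iff_lt_toReal hl.le ht
    rw [this, Real.volume_Ioo, sub_zero, ofReal_toReal ht]

section

variable {X : Type*} [MeasurableSpace X] {μ : Measure X}

theorem lintegral_mul_eq_lintegral_Ioi_indicator [SFinite μ] {c s : X → ℝ≥0∞}
    (hc : Measurable c) (hs : Measurable s) :
    ∫⁻ x, c x * s x ∂μ
      = ∫⁻ l in Ioi 0, ∫⁻ x, {x | ENNReal.ofReal l < s x}.indicator c x ∂μ := by
  have hmeas : MeasurableSet {p : ℝ × X | ENNReal.ofReal p.1 < s p.2} :=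
    measurableSet_lt (ENNReal.measurable_ofReal.comp measurable_fst) (hs.comp measurable_snd)
  have hG :
      Measurable (Function.uncurry fun l x => {x | ENNReal.ofReal l < s x}.indicator c x) :=
    (hc.comp measurable_snd).indicator hmeas
  rw [lintegral_lintegral_swap hG.aemeasurable]
  refine lintegral_congr fun x => ?_
  have hset : MeasurableSet {l : ℝ | ENNReal.ofReal l < s x} :=
    measurableSet_lt ENNReal.measurable_ofReal measurable_const
  calc c x * s x = c x * volume.restrict (Ioi 0) {l : ℝ | ENNReal.ofReal l < s x} := by
        rw [Measure.restrict_apply hset, volume_ofReal_lt_inter_Ioi]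
    _ = _ := (lintegral_indicator_const hset _).symm

theorem lintegral_restrict_sigmaFiniteSet {E : Type*} [NormedAddCommGroup E] {f : X → E}
    (hf : AEFinStronglyMeasurable f μ) {φ : X → ℝ≥0∞} (hφ : ∀ x, f x = 0 → φ x = 0) :
    ∫⁻ x in hf.sigmaFiniteSet, φ x ∂μ = ∫⁻ x, φ x ∂μ := by
  have hzero : ∫⁻ x in hf.sigmaFiniteSetᶜ, φ x ∂μ = 0 := by
    rw [lintegral_congr_ae (g := fun _ => 0) (hf.ae_eq_zero_compl.mono fun x => hφ x),
      lintegral_zero]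
  rw [← lintegral_add_compl φ hf.measurableSet (μ := μ), hzero, add_zero]

theorem enorm_add_sq_le_four_mul_enorm_sq {E : Type*} [SeminormedAddGroup E] {v w : E}
    (hv : ‖v‖ ≤ ‖v + w‖ / 2) : ‖v + w‖ₑ ^ 2 ≤ 4 * ‖w‖ₑ ^ 2 := by
  have : ‖v + w‖ₑ ≤ 2 * ‖w‖ₑ := by
    rw [← ofReal_norm, ← ofReal_norm, ← ofReal_ofNat, ← ofReal_mul zero_le_two]
    exact ofReal_le_ofReal (by linarith [norm_add_le v w])
  calc ‖v + w‖ₑ ^ 2 ≤ (2 * ‖w‖ₑ) ^ 2 := by gcongr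
    _ = 4 * ‖w‖ₑ ^ 2 := by rw [mul_pow]; norm_num

theorem eLpNorm_two_sq {E : Type*} [NormedAddCommGroup E] (h : X → E) :
    eLpNorm h 2 μ ^ 2 = ∫⁻ x, ‖h x‖ₑ ^ 2 ∂μ := by
  simpa using eLpNorm_nnreal_pow_eq_lintegral (f := h) (μ := μ) (p := 2) two_ne_zero

theorem lintegral_indicator_enorm_sq_le {E : Type*} [NormedAddCommGroup E] {f g h : X → E}
    {S : Set X} (hfgh : f =ᵐ[μ] g + h) (hg : ∀ᵐ x ∂μ, x ∈ S → ‖g x‖ ≤ ‖f x‖ / 2) :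
    ∫⁻ x, S.indicator (fun x => ‖f x‖ₑ ^ 2) x ∂μ ≤ 4 * eLpNorm h 2 μ ^ 2 := by
  rw [eLpNorm_two_sq, ← lintegral_const_mul' _ _ (by norm_num)]
  refine lintegral_mono_ae ?_
  filter_upwards [hfgh, hg] with x hfx hgx
  by_cases hx : x ∈ S
  · rw [Pi.add_apply] at hfx
    rw [indicator_of_mem hx, hfx]
    exact enorm_add_sq_le_four_mul_enorm_sq (hfx ▸ hgx hx)
  · rw [indicator_of_notMem hx]
    positivity

theorem lintegral_enorm_sq_mul_le {E : Type*} [NormedAddCommGroup E] {f : X → E}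
    {s : X → ℝ≥0∞} {g h : ℝ → X → E} (hf : AEFinStronglyMeasurable f μ) (hs : AEMeasurable s μ)
    (hfgh : ∀ l, 0 < l → f =ᵐ[μ] g l + h l)
    (hg : ∀ l, 0 < l → ∀ᵐ x ∂μ, ENNReal.ofReal l < s x → ‖g l x‖ ≤ ‖f x‖ / 2) :
    ∫⁻ x, ‖f x‖ₑ ^ 2 * s x ∂μ ≤ 4 * ∫⁻ l in Ioi 0, eLpNorm (h l) 2 μ ^ 2 := by
  set T := hf.sigmaFiniteSet
  have : SigmaFinite (μ.restrict T) := hf.sigmaFinite_restrict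
  set f' := hf.mk f
  have hff' : f =ᵐ[μ] f' := hf.ae_eq_mk
  have hc : Measurable fun x => ‖f' x‖ₑ ^ 2 :=
    hf.finStronglyMeasurable_mk.stronglyMeasurable.enorm.pow_const 2
  calc ∫⁻ x, ‖f x‖ₑ ^ 2 * s x ∂μ = ∫⁻ x in T, ‖f x‖ₑ ^ 2 * s x ∂μ :=
        (lintegral_restrict_sigmaFiniteSet hf fun x hx => by simp [hx]).symm
    _ = ∫⁻ x in T, ‖f' x‖ₑ ^ 2 * hs.mk s x ∂μ := by
        refine lintegral_congr_ae (ae_restrict_of_ae ?_)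
        filter_upwards [hff', hs.ae_eq_mk] with x hfx hsx
        rw [hfx, hsx]
    _ = ∫⁻ l in Ioi 0, ∫⁻ x in T,
          {x | ENNReal.ofReal l < hs.mk s x}.indicator (fun x => ‖f' x‖ₑ ^ 2) x ∂μ :=
        lintegral_mul_eq_lintegral_Ioi_indicator hc hs.measurable_mk
    _ ≤ ∫⁻ l in Ioi 0, 4 * eLpNorm (h l) 2 μ ^ 2 := by
        refine setLIntegral_mono' measurableSet_Ioi fun l hl => ?_
        have hgl :
            ∀ᵐ x ∂μ, x ∈ {x | ENNReal.ofReal l < hs.mk s x} → ‖g l x‖ ≤ ‖f' x‖ / 2 := by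
          filter_upwards [hg l hl, hff', hs.ae_eq_mk] with x hx hfx hsx
          rwa [hfx, hsx] at hx
        calc _ ≤ 4 * eLpNorm (h l) 2 (μ.restrict T) ^ 2 :=
              lintegral_indicator_enorm_sq_le
                (ae_restrict_of_ae (hff'.symm.trans (hfgh l hl))) (ae_restrict_of_ae hgl)
          _ ≤ 4 * eLpNorm (h l) 2 μ ^ 2 := by
              gcongr
              exact Measure.restrict_le_self
    _ = 4 * ∫⁻ l in Ioi 0, eLpNorm (h l) 2 μ ^ 2 := lintegral_const_mul' _ _ (by norm_num)

theorem ae_norm_le_half_of_ofReal_lt_generalizedInverse {E : Type*} [NormedAddCommGroup E]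
    {F : ℝ → ℝ} (hF : MonotoneOn F (Ioi 0)) {l : ℝ} (hl : 0 < l) {f g : X → E} {n : ℝ≥0∞}
    (hn : n ≠ ⊤) (hg : eLpNorm g ⊤ μ ≤ ENNReal.ofReal (F l) * n) :
    ∀ᵐ x ∂μ, ENNReal.ofReal l < generalizedInverse F (‖f x‖ / (2 * n.toReal)) →
      ‖g x‖ ≤ ‖f x‖ / 2 := by
  filter_upwards [ae_le_eLpNormEssSup (f := g) (μ := μ)] with x hx hlt
  have hFl : F l * n.toReal ≤ ‖f x‖ / 2 := by
    rcases (toReal_nonneg (a := n)).eq_or_lt with h0 | hpos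
    · rw [← h0, mul_zero]
      positivity
    · calc F l * n.toReal ≤ ‖f x‖ / (2 * n.toReal) * n.toReal :=
            mul_le_mul_of_nonneg_right (le_of_ofReal_lt_generalizedInverse hF hl hlt) hpos.le
        _ = ‖f x‖ / 2 := by field_simp
  rw [← ofReal_norm, ← eLpNorm_exponent_top] at hx
  refine (ofReal_le_ofReal_iff (by positivity)).mp (hx.trans (hg.trans ?_))
  rw [← ofReal_toReal hn, ← ofReal_mul' toReal_nonneg]
  exact ofReal_le_ofReal hFl

end

theorem stmt_2_general {X : Type*} [MeasurableSpace X] (μ : Measure X)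
    (f : X → ℝ) (hf1 : MemLp f 1 μ)
    (E : ℝ)
    (F : ℝ → ℝ)
    (hF_mono : ∀ a b, 0 < a → a ≤ b → F a ≤ F b)
    (Finv : ℝ → ℝ≥0∞)
    (hFinv : ∀ y, Finv y
      = sSup {t : ℝ≥0∞ | ∃ l : ℝ, 0 < l ∧ F l ≤ y ∧ t = ENNReal.ofReal l})
    (g h : ℝ → X → ℝ)
    (h_dec : ∀ l, 0 < l → MemLp (g l) 2 μ ∧ MemLp (h l) 2 μ ∧
      f =ᵐ[μ] g l + h l ∧
      eLpNorm (g l) ⊤ μ ≤ ENNReal.ofReal (F l) * eLpNorm f 1 μ)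
    (h_int : ∫⁻ l in Ioi (0 : ℝ), (eLpNorm (h l) 2 μ) ^ 2 ≤ ENNReal.ofReal E) :
    ∫⁻ x, ENNReal.ofReal (‖f x‖ ^ 2)
        * Finv (‖f x‖ / (2 * (eLpNorm f 1 μ).toReal)) ∂μ
      ≤ ENNReal.ofReal (4 * E) := by
  obtain rfl : Finv = generalizedInverse F := funext hFinv
  have hF : MonotoneOn F (Ioi 0) := fun a ha _ _ hab => hF_mono a _ ha hab
  have hs : AEMeasurable
      (fun x => generalizedInverse F (‖f x‖ / (2 * (eLpNorm f 1 μ).toReal))) μ :=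
    (monotone_generalizedInverse F).measurable.comp_aemeasurable
      (hf1.aestronglyMeasurable.aemeasurable.norm.div_const _)
  calc _ = ∫⁻ x, ‖f x‖ₑ ^ 2 * generalizedInverse F (‖f x‖ / (2 * (eLpNorm f 1 μ).toReal)) ∂μ := by
        simp_rw [ofReal_pow (norm_nonneg _), ofReal_norm]
    _ ≤ 4 * ∫⁻ l in Ioi 0, eLpNorm (h l) 2 μ ^ 2 :=
        lintegral_enorm_sq_mul_le (hf1.aefinStronglyMeasurable one_ne_zero one_ne_top) hs
          (fun l hl => (h_dec l hl).2.2.1) fun l hl =>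
          ae_norm_le_half_of_ofReal_lt_generalizedInverse hF hl hf1.eLpNorm_ne_top
            (h_dec l hl).2.2.2
    _ ≤ 4 * ENNReal.ofReal E := by gcongr
    _ = ENNReal.ofReal (4 * E) := by rw [ofReal_mul zero_le_four, ofReal_ofNat]

/-- analytic core of the first inequality of Theorem 1.3.
Given a spectral-type decomposition `f = g λ + h λ` with `‖g λ‖_∞ ≤ F(λ)·‖f‖₁` and
`∫₀^∞ ‖h λ‖₂² dλ ≤ E`, one has `∫_X |f|² F⁻¹(|f|/(2‖f‖₁)) dμ ≤ 4E`, where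
`F⁻¹(y) = sup {λ > 0 | F λ ≤ y}` (computed in `[0,∞]`, with `sup ∅ = 0`). -/
theorem stmt_2 {X : Type*} [MeasurableSpace X] (μ : Measure X)
    (f : X → ℝ) (hf1 : MemLp f 1 μ) (hf2 : MemLp f 2 μ) (hf_ne : ¬ f =ᵐ[μ] 0)
    (E : ℝ) (hE : 0 < E)
    (F : ℝ → ℝ) (hF_nonneg : ∀ l, 0 < l → 0 ≤ F l)
    (hF_mono : ∀ a b, 0 < a → a ≤ b → F a ≤ F b)
    (Finv : ℝ → ℝ≥0∞)
    (hFinv : ∀ y, Finv y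
      = sSup {t : ℝ≥0∞ | ∃ l : ℝ, 0 < l ∧ F l ≤ y ∧ t = ENNReal.ofReal l})
    (g h : ℝ → X → ℝ)
    (h_dec : ∀ l, 0 < l → MemLp (g l) 2 μ ∧ MemLp (h l) 2 μ ∧
      f =ᵐ[μ] g l + h l ∧
      eLpNorm (g l) ⊤ μ ≤ ENNReal.ofReal (F l) * eLpNorm f 1 μ)
    (h_meas : Measurable fun l : ℝ => (eLpNorm (h l) 2 μ) ^ 2)
    (h_int : ∫⁻ l in Ioi (0 : ℝ), (eLpNorm (h l) 2 μ) ^ 2 ≤ ENNReal.ofReal E) :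
    ∫⁻ x, ENNReal.ofReal (‖f x‖ ^ 2)
        * Finv (‖f x‖ / (2 * (eLpNorm f 1 μ).toReal)) ∂μ
      ≤ ENNReal.ofReal (4 * E) :=
  stmt_2_general μ f hf1 E F hF_mono Finv hFinv g h h_dec h_int
end

section
/- Let (X, μ) be a measure space, let f ∈ L¹(X, μ) ∩ L²(X, μ) be nonzero, and let E > 0. Let F : (0,∞) → [0,∞) be nondecreasing, and define F⁻¹(y) := sup{λ > 0 : F(λ) ≤ y} ∈ [0,∞] (with sup ∅ = 0). Assume that ∫_X |f(x)|² · F⁻¹(|f(x)| / (2‖f‖_{L¹})) dμ(x) ≤ 4E. Let φ : [0,∞) → [0,∞) be convex with φ(y) ≤ y · F⁻¹(y) for all y ≥ 0. Then ‖f‖_{L¹}² · φ(‖f‖_{L²}² / (2‖f‖_{L¹}²)) ≤ 2E. -/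
/-!
Jensen's inequality for the probability measure `|f| dμ / ‖f‖₁`, applied to `|f| / (2‖f‖₁)`,
whose mean is `‖f‖₂² / (2‖f‖₁²)`, gives
`‖f‖₁ φ(‖f‖₂² / (2‖f‖₁²)) ≤ ∫ |f| φ(|f| / (2‖f‖₁)) dμ`. The bound `φ(y) ≤ y F⁻¹(y)` turns the
right-hand side into at most `(2‖f‖₁)⁻¹ ∫ |f|² F⁻¹(|f| / (2‖f‖₁)) dμ ≤ 2E / ‖f‖₁`.
-/

open MeasureTheory Set ENNReal

theorem ConvexOn.monotoneOn_of_isMinOn {φ : ℝ → ℝ} {a : ℝ} (hφ : ConvexOn ℝ (Ici a) φ)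
    (hmin : IsMinOn φ (Ici a) a) : MonotoneOn φ (Ici a) := by
  intro x hx y hy hxy
  rcases (mem_Ici.mp hx).eq_or_lt with rfl | hax
  · exact hmin hy
  rcases hxy.eq_or_lt with rfl | hxy
  · rfl
  exact hφ.le_right_of_left_le self_mem_Ici hy
    (by rw [openSegment_eq_Ioo (hax.trans hxy)]; exact ⟨hax, hxy⟩) (hmin hx)

theorem ConvexOn.add_rightDeriv_mul_sub_le {S : Set ℝ} {φ : ℝ → ℝ} (hφ : ConvexOn ℝ S φ)
    {m y : ℝ} (hm : m ∈ interior S) (hy : y ∈ S) :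
    φ m + derivWithin φ (Ioi m) m * (y - m) ≤ φ y := by
  rcases lt_trichotomy y m with hym | rfl | hmy
  · have h := (hφ.slope_le_leftDeriv_of_mem_interior hy hm hym).trans
      (hφ.leftDeriv_le_rightDeriv_of_mem_interior hm)
    rw [slope_def_field, div_le_iff₀ (sub_pos.2 hym)] at h
    linarith
  · simp
  · have h := hφ.rightDeriv_le_slope_of_mem_interior hm hy hmy
    rw [slope_def_field, le_div_iff₀ (sub_pos.2 hmy)] at h
    linarith

section Integrals

variable {X : Type*} [MeasurableSpace X] {μ : Measure X}

theorem MonotoneOn.aestronglyMeasurable_comp {φ : ℝ → ℝ} {a : ℝ} (hφ : MonotoneOn φ (Ici a))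
    {g : X → ℝ} (hg : AEMeasurable g μ) (hga : ∀ x, a ≤ g x) :
    AEStronglyMeasurable (fun x ↦ φ (g x)) μ := by
  have hmono : Monotone fun y ↦ φ (max y a) := fun y z hyz ↦
    hφ (le_max_right y a) (le_max_right z a) (max_le_max_right a hyz)
  simpa only [Function.comp_def, max_eq_left (hga _)] using
    (hmono.measurable.comp_aemeasurable hg).aestronglyMeasurable

theorem ConvexOn.map_weighted_average_le {S : Set ℝ} {φ : ℝ → ℝ} (hφ : ConvexOn ℝ S φ)
    {w g : X → ℝ} (hw : ∀ᵐ x ∂μ, 0 ≤ w x) (hW : ∫ x, w x ∂μ ≠ 0) (hg : ∀ᵐ x ∂μ, g x ∈ S)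
    (hwi : Integrable w μ) (hwgi : Integrable (fun x ↦ w x * g x) μ)
    (hwφgi : Integrable (fun x ↦ w x * φ (g x)) μ)
    (hm : (∫ x, w x * g x ∂μ) / ∫ x, w x ∂μ ∈ interior S) :
    (∫ x, w x ∂μ) * φ ((∫ x, w x * g x ∂μ) / ∫ x, w x ∂μ) ≤ ∫ x, w x * φ (g x) ∂μ := by
  set m := (∫ x, w x * g x ∂μ) / ∫ x, w x ∂μ
  set c := derivWithin φ (Ioi m) m
  have hsplit : (fun x ↦ w x * (φ m + c * (g x - m)))
      = fun x ↦ (φ m - c * m) * w x + c * (w x * g x) := by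
    funext x; ring
  have hline : ∫ x, w x * (φ m + c * (g x - m)) ∂μ = (∫ x, w x ∂μ) * φ m := by
    rw [hsplit, integral_add (hwi.const_mul _) (hwgi.const_mul _), integral_const_mul,
      integral_const_mul]
    simp only [m]
    field_simp
    ring
  rw [← hline]
  refine integral_mono_ae (hsplit ▸ (hwi.const_mul _).add (hwgi.const_mul _)) hwφgi ?_
  filter_upwards [hw, hg] with x hwx hgx
  exact mul_le_mul_of_nonneg_left (hφ.add_rightDeriv_mul_sub_le hm hgx) hwx

theorem integrable_and_integral_le_of_lintegral_le {G : X → ℝ} {C : ℝ}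
    (hG : AEStronglyMeasurable G μ) (hG0 : 0 ≤ᵐ[μ] G) (hC : 0 ≤ C)
    (h : ∫⁻ x, ENNReal.ofReal (G x) ∂μ ≤ ENNReal.ofReal C) :
    Integrable G μ ∧ ∫ x, G x ∂μ ≤ C := by
  refine ⟨⟨hG, (hasFiniteIntegral_iff_ofReal hG0).2 (h.trans_lt ofReal_lt_top)⟩, ?_⟩
  rw [integral_eq_lintegral_of_nonneg_ae hG0 hG]
  exact toReal_le_of_le_ofReal hC h

theorem lintegral_mul_map_div_le {φ : ℝ → ℝ} {ψ : ℝ → ℝ≥0∞}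
    (hφψ : ∀ y, 0 ≤ y → ENNReal.ofReal (φ y) ≤ ENNReal.ofReal y * ψ y)
    {a : ℝ} (ha : 0 ≤ a) {g : X → ℝ} (hg : ∀ x, 0 ≤ g x) :
    ∫⁻ x, ENNReal.ofReal (g x * φ (g x / a)) ∂μ
      ≤ ENNReal.ofReal a⁻¹ * ∫⁻ x, ENNReal.ofReal (g x ^ 2) * ψ (g x / a) ∂μ := by
  rw [← lintegral_const_mul' _ _ ofReal_ne_top]
  refine lintegral_mono fun x ↦ ?_
  calc ENNReal.ofReal (g x * φ (g x / a))
      = ENNReal.ofReal (g x) * ENNReal.ofReal (φ (g x / a)) := ofReal_mul (hg x)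
    _ ≤ ENNReal.ofReal (g x) * (ENNReal.ofReal (g x / a) * ψ (g x / a)) := by
      gcongr; exact hφψ _ (div_nonneg (hg x) ha)
    _ = ENNReal.ofReal a⁻¹ * (ENNReal.ofReal (g x ^ 2) * ψ (g x / a)) := by
      rw [← mul_assoc, ← mul_assoc, ← ofReal_mul (hg x), ← ofReal_mul (inv_nonneg.2 ha)]
      congr 2
      ring

variable {E : Type*} [NormedAddCommGroup E]

theorem lpNorm_two_sq_eq_integral_norm_sq {f : X → E} (hf : AEStronglyMeasurable f μ) :
    lpNorm f 2 μ ^ 2 = ∫ x, ‖f x‖ ^ 2 ∂μ := by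
  rw [lpNorm_eq_integral_norm_rpow_toReal two_ne_zero ofNat_ne_top hf]
  simpa using Real.rpow_inv_natCast_pow (integral_nonneg fun x ↦ by positivity) two_ne_zero

theorem integral_norm_mul_map_div_le {f : X → E} (hf : AEStronglyMeasurable f μ)
    {φ : ℝ → ℝ} {ψ : ℝ → ℝ≥0∞} (hφ_mono : MonotoneOn φ (Ici 0))
    (hφ_nonneg : ∀ y, 0 ≤ y → 0 ≤ φ y)
    (hφψ : ∀ y, 0 ≤ y → ENNReal.ofReal (φ y) ≤ ENNReal.ofReal y * ψ y) {a C : ℝ} (ha : 0 ≤ a)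
    (hC : 0 ≤ C) (h : ∫⁻ x, ENNReal.ofReal (‖f x‖ ^ 2) * ψ (‖f x‖ / a) ∂μ ≤ ENNReal.ofReal C) :
    Integrable (fun x ↦ ‖f x‖ * φ (‖f x‖ / a)) μ ∧ ∫ x, ‖f x‖ * φ (‖f x‖ / a) ∂μ ≤ C / a := by
  have hg : ∀ x, 0 ≤ ‖f x‖ / a := fun x ↦ div_nonneg (norm_nonneg _) ha
  refine integrable_and_integral_le_of_lintegral_le
    (hf.norm.mul (hφ_mono.aestronglyMeasurable_comp (hf.norm.aemeasurable.div_const a) hg))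
    (.of_forall fun x ↦ mul_nonneg (norm_nonneg _) (hφ_nonneg _ (hg x))) (div_nonneg hC ha) ?_
  calc _ ≤ ENNReal.ofReal a⁻¹ * _ := lintegral_mul_map_div_le hφψ ha fun x ↦ norm_nonneg (f x)
    _ ≤ ENNReal.ofReal a⁻¹ * ENNReal.ofReal C := by gcongr
    _ = ENNReal.ofReal (C / a) := by rw [← ofReal_mul (inv_nonneg.2 ha), inv_mul_eq_div]

theorem ConvexOn.lpNorm_one_mul_map_le {φ : ℝ → ℝ} (hφ : ConvexOn ℝ (Ici 0) φ) {f : X → E}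
    (hf1 : MemLp f 1 μ) (hf2 : MemLp f 2 μ) (hN1 : 0 < lpNorm f 1 μ) {a : ℝ} (ha : 0 < a)
    (hG : Integrable (fun x ↦ ‖f x‖ * φ (‖f x‖ / a)) μ) :
    lpNorm f 1 μ * φ (lpNorm f 2 μ ^ 2 / (a * lpNorm f 1 μ))
      ≤ ∫ x, ‖f x‖ * φ (‖f x‖ / a) ∂μ := by
  have hN2 : 0 < lpNorm f 2 μ := lpNorm_nonneg.lt_of_ne' fun h ↦
    hN1.ne' ((lpNorm_eq_zero hf1 one_ne_zero).2 ((lpNorm_eq_zero hf2 two_ne_zero).1 h))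
  have hsq : (fun x ↦ ‖f x‖ * (‖f x‖ / a)) = fun x ↦ ‖f x‖ ^ 2 / a := by
    funext x; ring
  have hint : ∫ x, ‖f x‖ ∂μ = lpNorm f 1 μ :=
    (lpNorm_one_eq_integral_norm hf1.aestronglyMeasurable).symm
  have hmean : (∫ x, ‖f x‖ * (‖f x‖ / a) ∂μ) / ∫ x, ‖f x‖ ∂μ
      = lpNorm f 2 μ ^ 2 / (a * lpNorm f 1 μ) := by
    rw [hsq, integral_div, ← lpNorm_two_sq_eq_integral_norm_sq hf2.aestronglyMeasurable, hint,
      div_div]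
  have h := hφ.map_weighted_average_le (.of_forall fun x ↦ norm_nonneg (f x))
    (hint ▸ hN1.ne') (.of_forall fun x ↦ div_nonneg (norm_nonneg (f x)) ha.le)
    (memLp_one_iff_integrable.1 hf1).norm
    (hsq ▸ (hf2.integrable_norm_pow two_ne_zero).div_const a) hG
    (by rw [hmean, interior_Ici]; exact mem_Ioi.2 (by positivity))
  rwa [hmean, hint] at h

end Integrals

theorem stmt_3_general {X : Type*} [MeasurableSpace X] (μ : Measure X)
    (f : X → ℝ) (hf1 : MemLp f 1 μ) (hf2 : MemLp f 2 μ)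
    (E : ℝ) (hE : 0 < E)
    (Finv : ℝ → ℝ≥0∞)
    (h_sob : ∫⁻ x, ENNReal.ofReal (‖f x‖ ^ 2)
        * Finv (‖f x‖ / (2 * (eLpNorm f 1 μ).toReal)) ∂μ
      ≤ ENNReal.ofReal (4 * E))
    (φ : ℝ → ℝ) (hφ_conv : ConvexOn ℝ (Ici 0) φ)
    (hφ_nonneg : ∀ y, 0 ≤ y → 0 ≤ φ y)
    (hφ_le : ∀ y, 0 ≤ y → ENNReal.ofReal (φ y) ≤ ENNReal.ofReal y * Finv y) :
    (eLpNorm f 1 μ).toReal ^ 2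
        * φ ((eLpNorm f 2 μ).toReal ^ 2 / (2 * (eLpNorm f 1 μ).toReal ^ 2))
      ≤ 2 * E := by
  have hfm := hf1.aestronglyMeasurable
  rw [toReal_eLpNorm hfm] at h_sob
  rw [toReal_eLpNorm hfm, toReal_eLpNorm hf2.aestronglyMeasurable]
  rcases (lpNorm_nonneg (f := f) (p := 1) (μ := μ)).eq_or_lt with hN1 | hN1
  · simpa [← hN1] using hE.le
  set N1 := lpNorm f 1 μ
  have hφ0 : φ 0 ≤ 0 := by simpa using hφ_le 0 le_rfl
  -- `φ` is not assumed measurable; its monotonicity makes `φ (|f| / (2‖f‖₁))` measurable.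
  have hφ_mono := hφ_conv.monotoneOn_of_isMinOn fun y hy ↦ hφ0.trans (hφ_nonneg y hy)
  obtain ⟨hG, hG_le⟩ := integral_norm_mul_map_div_le hfm hφ_mono hφ_nonneg hφ_le
    (by positivity : 0 ≤ 2 * N1) (by positivity : 0 ≤ 4 * E) h_sob
  have hjensen := hφ_conv.lpNorm_one_mul_map_le hf1 hf2 hN1 (by positivity) hG
  rw [mul_assoc, ← sq] at hjensen
  calc N1 ^ 2 * φ (lpNorm f 2 μ ^ 2 / (2 * N1 ^ 2))
      = N1 * (N1 * φ (lpNorm f 2 μ ^ 2 / (2 * N1 ^ 2))) := by ring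
    _ ≤ N1 * (4 * E / (2 * N1)) := by gcongr; exact hjensen.trans hG_le
    _ = 2 * E := by field_simp; ring

/-- Nash-type inequality, second part of Theorem 1.3.
From `∫_X |f|² F⁻¹(|f|/(2‖f‖₁)) dμ ≤ 4E` and a convex `φ : [0,∞) → [0,∞)` with
`φ(y) ≤ y·F⁻¹(y)`, one deduces `‖f‖₁² φ(‖f‖₂²/(2‖f‖₁²)) ≤ 2E`. Here
`F⁻¹(y) = sup {λ > 0 | F λ ≤ y}` (in `[0,∞]`, `sup ∅ = 0`). -/
theorem stmt_3 {X : Type*} [MeasurableSpace X] (μ : Measure X)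
    (f : X → ℝ) (hf1 : MemLp f 1 μ) (hf2 : MemLp f 2 μ) (hf_ne : ¬ f =ᵐ[μ] 0)
    (E : ℝ) (hE : 0 < E)
    (F : ℝ → ℝ) (hF_nonneg : ∀ l, 0 < l → 0 ≤ F l)
    (hF_mono : ∀ a b, 0 < a → a ≤ b → F a ≤ F b)
    (Finv : ℝ → ℝ≥0∞)
    (hFinv : ∀ y, Finv y
      = sSup {t : ℝ≥0∞ | ∃ l : ℝ, 0 < l ∧ F l ≤ y ∧ t = ENNReal.ofReal l})
    (h_sob : ∫⁻ x, ENNReal.ofReal (‖f x‖ ^ 2)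
        * Finv (‖f x‖ / (2 * (eLpNorm f 1 μ).toReal)) ∂μ
      ≤ ENNReal.ofReal (4 * E))
    (φ : ℝ → ℝ) (hφ_conv : ConvexOn ℝ (Ici 0) φ)
    (hφ_nonneg : ∀ y, 0 ≤ y → 0 ≤ φ y)
    (hφ_le : ∀ y, 0 ≤ y → ENNReal.ofReal (φ y) ≤ ENNReal.ofReal y * Finv y) :
    (eLpNorm f 1 μ).toReal ^ 2
        * φ ((eLpNorm f 2 μ).toReal ^ 2 / (2 * (eLpNorm f 1 μ).toReal ^ 2))
      ≤ 2 * E :=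
  stmt_3_general μ f hf1 hf2 E hE Finv h_sob φ hφ_conv hφ_nonneg hφ_le
end

section
/- Let (X, μ) be a measure space, let f ∈ L¹(X, μ) ∩ L²(X, μ) be nonzero, and let E > 0. Let φ : [0,∞) → [0,∞) be convex with φ(0) = 0. Suppose the Nash-type inequality ‖f‖_{L¹}² · φ(‖f‖_{L²}² / (2‖f‖_{L¹}²)) ≤ 2E holds, and that f vanishes almost everywhere outside a measurable set Ω ⊆ X with 0 < μ(Ω) < ∞. Then μ(Ω) · φ(1 / (2μ(Ω))) ≤ 2E / ‖f‖_{L²}². -/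
/-!
Cauchy–Schwarz on `Ω` gives `‖f‖₁² ≤ μ(Ω) ‖f‖₂²`, i.e. `1 / (2μ(Ω)) ≤ ‖f‖₂² / (2‖f‖₁²)`.
Since `φ(0) = 0`, convexity makes `y ↦ φ(y) / y` nondecreasing on `(0, ∞)`, and comparing its
values at these two points turns the Nash inequality into the Faber–Krahn inequality.
-/

open MeasureTheory Set ENNReal

theorem ConvexOn.monotoneOn_div_self_of_map_zero {𝕜 : Type*} [Field 𝕜] [LinearOrder 𝕜]
    [IsStrictOrderedRing 𝕜] {φ : 𝕜 → 𝕜} (hφ : ConvexOn 𝕜 (Ici 0) φ) (hφ0 : φ 0 = 0) :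
    MonotoneOn (fun y ↦ φ y / y) (Ioi 0) := by
  intro x hx y hy hxy
  simpa [hφ0] using hφ.secant_mono self_mem_Ici (mem_Ici.2 hx.le) (mem_Ici.2 hy.le)
    hx.ne' hy.ne' hxy

section

variable {X E : Type*} [MeasurableSpace X] {μ : Measure X} [NormedAddCommGroup E]

theorem MeasureTheory.MemLp.toReal_eLpNorm_pos {p : ℝ≥0∞} {f : X → E} (hf : MemLp f p μ)
    (hp : p ≠ 0) (hf0 : ¬ f =ᵐ[μ] 0) : 0 < (eLpNorm f p μ).toReal :=
  ENNReal.toReal_pos (by rwa [Ne, eLpNorm_eq_zero_iff hf.aestronglyMeasurable hp])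
    hf.eLpNorm_ne_top

theorem eLpNorm_le_eLpNorm_mul_rpow_measure_of_ae_eq_zero_off {p q : ℝ≥0∞} (hpq : p ≤ q)
    {f : X → E} (hf : AEStronglyMeasurable f μ) {s : Set X} (hfs : ∀ᵐ x ∂μ, x ∉ s → f x = 0) :
    eLpNorm f p μ ≤ eLpNorm f q μ * μ s ^ (1 / p.toReal - 1 / q.toReal) := by
  have hf_eq : f =ᵐ[μ] s.indicator f := by
    filter_upwards [hfs] with x hx
    by_cases hxs : x ∈ s <;> simp [hxs, hx]
  have hsupp : (s.indicator f).support ⊆ s := support_indicator_subset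
  rw [eLpNorm_congr_ae hf_eq, eLpNorm_congr_ae hf_eq,
    ← eLpNorm_restrict_eq_of_support_subset hsupp,
    ← eLpNorm_restrict_eq_of_support_subset (p := q) hsupp, ← Measure.restrict_apply_univ s]
  exact eLpNorm_le_eLpNorm_mul_rpow_measure_univ hpq (hf.congr hf_eq).restrict

theorem toReal_eLpNorm_one_sq_le_measure_mul_sq {f : X → E} (hf : MemLp f 2 μ) {s : Set X}
    (hs : μ s ≠ ⊤) (hfs : ∀ᵐ x ∂μ, x ∉ s → f x = 0) :
    (eLpNorm f 1 μ).toReal ^ 2 ≤ (μ s).toReal * (eLpNorm f 2 μ).toReal ^ 2 := by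
  have hsq : (μ s ^ (1 / (1 : ℝ≥0∞).toReal - 1 / (2 : ℝ≥0∞).toReal)) ^ 2 = μ s := by
    rw [← ENNReal.rpow_natCast, ← ENNReal.rpow_mul]
    norm_num
  have hCS : eLpNorm f 1 μ ^ 2 ≤ μ s * eLpNorm f 2 μ ^ 2 :=
    calc eLpNorm f 1 μ ^ 2
        ≤ (eLpNorm f 2 μ * μ s ^ (1 / (1 : ℝ≥0∞).toReal - 1 / (2 : ℝ≥0∞).toReal)) ^ 2 := by
          gcongr
          exact eLpNorm_le_eLpNorm_mul_rpow_measure_of_ae_eq_zero_off one_le_two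
            hf.aestronglyMeasurable hfs
      _ = μ s * eLpNorm f 2 μ ^ 2 := by rw [mul_pow, hsq, mul_comm]
  have hfin : μ s * eLpNorm f 2 μ ^ 2 ≠ ⊤ :=
    ENNReal.mul_ne_top hs (ENNReal.pow_ne_top hf.eLpNorm_ne_top)
  simpa [ENNReal.toReal_mul, ENNReal.toReal_pow] using ENNReal.toReal_mono hfin hCS

end

theorem stmt_4_general {X : Type*} [MeasurableSpace X] (μ : Measure X)
    (f : X → ℝ) (hf1 : MemLp f 1 μ) (hf2 : MemLp f 2 μ) (hf_ne : ¬ f =ᵐ[μ] 0)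
    (E : ℝ)
    (φ : ℝ → ℝ) (hφ_conv : ConvexOn ℝ (Ici 0) φ)
    (hφ_zero : φ 0 = 0)
    (h_nash : (eLpNorm f 1 μ).toReal ^ 2
        * φ ((eLpNorm f 2 μ).toReal ^ 2 / (2 * (eLpNorm f 1 μ).toReal ^ 2))
      ≤ 2 * E)
    (Ω : Set X) (hΩ_pos : 0 < μ Ω) (hΩ_fin : μ Ω < ⊤)
    (h_supp : ∀ᵐ x ∂μ, x ∉ Ω → f x = 0) :
    (μ Ω).toReal * φ (1 / (2 * (μ Ω).toReal))
      ≤ 2 * E / (eLpNorm f 2 μ).toReal ^ 2 := by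
  set a := (eLpNorm f 1 μ).toReal
  set b := (eLpNorm f 2 μ).toReal
  set m := (μ Ω).toReal
  have ha : 0 < a := hf1.toReal_eLpNorm_pos one_ne_zero hf_ne
  have hb : 0 < b := hf2.toReal_eLpNorm_pos two_ne_zero hf_ne
  have hm : 0 < m := ENNReal.toReal_pos hΩ_pos.ne' hΩ_fin.ne
  have hCS : a ^ 2 ≤ m * b ^ 2 :=
    toReal_eLpNorm_one_sq_le_measure_mul_sq hf2 hΩ_fin.ne h_supp
  have hxy : 1 / (2 * m) ≤ b ^ 2 / (2 * a ^ 2) := by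
    rw [div_le_div_iff₀ (by positivity) (by positivity)]
    linarith
  have hratio := hφ_conv.monotoneOn_div_self_of_map_zero hφ_zero
    (mem_Ioi.2 (by positivity)) (mem_Ioi.2 (by positivity)) hxy
  rw [div_le_div_iff₀ (by positivity) (by positivity)] at hratio
  rw [le_div_iff₀ (by positivity)]
  calc m * φ (1 / (2 * m)) * b ^ 2
      = 2 * m * a ^ 2 * (φ (1 / (2 * m)) * (b ^ 2 / (2 * a ^ 2))) := by field_simp
    _ ≤ 2 * m * a ^ 2 * (φ (b ^ 2 / (2 * a ^ 2)) * (1 / (2 * m))) := by gcongr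
    _ = a ^ 2 * φ (b ^ 2 / (2 * a ^ 2)) := by field_simp
    _ ≤ 2 * E := h_nash

/-- Faber–Krahn type inequality, third part of Theorem 1.3.
If `f` is supported in a set `Ω` of finite positive measure and the Nash-type
inequality `‖f‖₁² φ(‖f‖₂²/(2‖f‖₁²)) ≤ 2E` holds for a convex `φ : [0,∞) → [0,∞)`
with `φ(0) = 0`, then `μ(Ω) φ(1/(2μ(Ω))) ≤ 2E/‖f‖₂²`. -/
theorem stmt_4 {X : Type*} [MeasurableSpace X] (μ : Measure X)
    (f : X → ℝ) (hf1 : MemLp f 1 μ) (hf2 : MemLp f 2 μ) (hf_ne : ¬ f =ᵐ[μ] 0)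
    (E : ℝ) (hE : 0 < E)
    (φ : ℝ → ℝ) (hφ_conv : ConvexOn ℝ (Ici 0) φ)
    (hφ_nonneg : ∀ y, 0 ≤ y → 0 ≤ φ y) (hφ_zero : φ 0 = 0)
    (h_nash : (eLpNorm f 1 μ).toReal ^ 2
        * φ ((eLpNorm f 2 μ).toReal ^ 2 / (2 * (eLpNorm f 1 μ).toReal ^ 2))
      ≤ 2 * E)
    (Ω : Set X) (hΩ_meas : MeasurableSet Ω) (hΩ_pos : 0 < μ Ω) (hΩ_fin : μ Ω < ⊤)
    (h_supp : ∀ᵐ x ∂μ, x ∉ Ω → f x = 0) :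
    (μ Ω).toReal * φ (1 / (2 * (μ Ω).toReal))
      ≤ 2 * E / (eLpNorm f 2 μ).toReal ^ 2 :=
  stmt_4_general μ f hf1 hf2 hf_ne E φ hφ_conv hφ_zero h_nash Ω hΩ_pos hΩ_fin h_supp
end

section
/- Let (X, μ) be a measure space, let f ∈ L¹(X, μ) ∩ L²(X, μ) be nonzero, vanishing almost everywhere outside a measurable set Ω ⊆ X with 0 < μ(Ω) < ∞. Let F : (0,∞) → [0,∞) be nondecreasing and right-continuous, define F⁻¹(y) := sup{λ > 0 : F(λ) ≤ y} ∈ [0,∞] (with sup ∅ = 0), and let C ∈ (0,1] and φ : [0,∞) → [0,∞) satisfy φ(y) ≥ C · y · F⁻¹(y) for all y ≥ 0. Let λ₀ > 0 and E > 0 with E ≤ λ₀ ‖f‖_{L²}², and assume the Faber–Krahn inequality μ(Ω) · φ(1/(2μ(Ω))) ≤ 2E / ‖f‖_{L²}² holds. Then 2 μ(Ω) · F(4λ₀ / C) ≥ 1. -/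
open MeasureTheory Set ENNReal Filter Topology

/-!
The Faber–Krahn inequality and the energy bound give `φ(y) ≤ 4λ₀ y` at `y = 1/(2μ(Ω))`, so
the lower bound `φ(y) ≥ C y F⁻¹(y)` forces `F⁻¹(y) ≤ 4λ₀/C`. Right-continuity of `F` turns this
into `F(4λ₀/C) ≥ y`: were `F(4λ₀/C) < y`, then `F < y` just to the right of `4λ₀/C` as well,
pushing `F⁻¹(y)` beyond `4λ₀/C`.
-/

theorem le_of_sSup_sublevel_le {F : ℝ → ℝ} {t y : ℝ} (ht : 0 ≤ t)
    (hF : ContinuousWithinAt F (Ici t) t)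
    (h : sSup {s : ℝ≥0∞ | ∃ l : ℝ, 0 < l ∧ F l ≤ y ∧ s = ENNReal.ofReal l}
      ≤ ENNReal.ofReal t) :
    y ≤ F t := by
  by_contra! hFt
  have hF_right : Tendsto F (𝓝[>] t) (𝓝 (F t)) :=
    hF.mono_left (nhdsWithin_mono t Ioi_subset_Ici_self)
  obtain ⟨l, hFl, hlt⟩ :=
    ((hF_right.eventually (gt_mem_nhds hFt)).and self_mem_nhdsWithin).exists
  have hl : ENNReal.ofReal l ≤ ENNReal.ofReal t := by
    refine le_trans (le_sSup ?_) h
    exact ⟨l, ht.trans_lt hlt, hFl.le, rfl⟩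
  exact (ENNReal.ofReal_le_ofReal_iff ht).mp hl |>.not_gt hlt

theorem le_ofReal_div_of_ofReal_mul_le {a : ℝ≥0∞} {C y K : ℝ} (hC : 0 < C) (hy : 0 < y)
    (h : ENNReal.ofReal C * ENNReal.ofReal y * a ≤ ENNReal.ofReal (K * y)) :
    a ≤ ENNReal.ofReal (K / C) := by
  have hCy : ENNReal.ofReal C * ENNReal.ofReal y = ENNReal.ofReal (C * y) :=
    (ENNReal.ofReal_mul hC.le).symm
  have hKy : ENNReal.ofReal (K * y) = ENNReal.ofReal (C * y) * ENNReal.ofReal (K / C) := by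
    rw [← ENNReal.ofReal_mul (by positivity)]
    congr 1
    field_simp
  rw [hCy, hKy] at h
  exact (ENNReal.mul_le_mul_iff_right (by simp [hC, hy]) ofReal_ne_top).mp h

theorem stmt_5_general {X : Type*} [MeasurableSpace X] (μ : Measure X)
    (f : X → ℝ) (hf2 : MemLp f 2 μ) (hf_ne : ¬ f =ᵐ[μ] 0)
    (Ω : Set X) (hΩ_pos : 0 < μ Ω) (hΩ_fin : μ Ω < ⊤)
    (F : ℝ → ℝ)
    (hF_rc : ∀ l, 0 < l → ContinuousWithinAt F (Ici l) l)
    (Finv : ℝ → ℝ≥0∞)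
    (hFinv : ∀ y, Finv y
      = sSup {t : ℝ≥0∞ | ∃ l : ℝ, 0 < l ∧ F l ≤ y ∧ t = ENNReal.ofReal l})
    (C : ℝ) (hC : 0 < C)
    (φ : ℝ → ℝ)
    (hφ_ge : ∀ y, 0 ≤ y →
      ENNReal.ofReal C * ENNReal.ofReal y * Finv y ≤ ENNReal.ofReal (φ y))
    (lam0 : ℝ) (hlam0 : 0 < lam0)
    (E : ℝ) (hE_le : E ≤ lam0 * (eLpNorm f 2 μ).toReal ^ 2)
    (h_fk : (μ Ω).toReal * φ (1 / (2 * (μ Ω).toReal))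
      ≤ 2 * E / (eLpNorm f 2 μ).toReal ^ 2) :
    1 ≤ 2 * (μ Ω).toReal * F (4 * lam0 / C) := by
  set m := (μ Ω).toReal
  set y := 1 / (2 * m) with hy
  have hm : 0 < m := ENNReal.toReal_pos hΩ_pos.ne' hΩ_fin.ne
  have hN : 0 < (eLpNorm f 2 μ).toReal ^ 2 := by
    have hN_ne : eLpNorm f 2 μ ≠ 0 :=
      mt (eLpNorm_eq_zero_iff hf2.aestronglyMeasurable two_ne_zero).mp hf_ne
    exact pow_pos (ENNReal.toReal_pos hN_ne hf2.eLpNorm_ne_top) 2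
  have hφy : φ y ≤ 4 * lam0 * y := by
    have h_energy : m * φ y ≤ 2 * lam0 :=
      h_fk.trans <| (div_le_iff₀ hN).mpr (by linarith)
    have : 4 * lam0 * y = 2 * lam0 / m := by rw [hy]; field_simp; ring
    rw [this, le_div_iff₀ hm]
    linarith
  have hFinv_le : Finv y ≤ ENNReal.ofReal (4 * lam0 / C) :=
    le_ofReal_div_of_ofReal_mul_le hC (by positivity) <|
      (hφ_ge y (by positivity)).trans (ENNReal.ofReal_le_ofReal hφy)
  have hyF : y ≤ F (4 * lam0 / C) :=
    le_of_sSup_sublevel_le (by positivity) (hF_rc _ (by positivity)) (hFinv y ▸ hFinv_le)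
  calc (1 : ℝ) = 2 * m * y := by rw [hy]; field_simp
    _ ≤ 2 * m * F (4 * lam0 / C) := by gcongr

/-- uncertainty principle, inequality (8) of the paper.
If `f ≠ 0` is supported in `Ω` with `0 < μ(Ω) < ∞`, `F` is nondecreasing and
right-continuous on `(0,∞)`, `φ(y) ≥ C·y·F⁻¹(y)` with `C ∈ (0,1]`, the energy
satisfies `E ≤ λ₀‖f‖₂²`, and the Faber–Krahn inequality
`μ(Ω) φ(1/(2μ(Ω))) ≤ 2E/‖f‖₂²` holds, then `2 μ(Ω) F(4λ₀/C) ≥ 1`. Here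
`F⁻¹(y) = sup {λ > 0 | F λ ≤ y}` (in `[0,∞]`, `sup ∅ = 0`). -/
theorem stmt_5 {X : Type*} [MeasurableSpace X] (μ : Measure X)
    (f : X → ℝ) (hf1 : MemLp f 1 μ) (hf2 : MemLp f 2 μ) (hf_ne : ¬ f =ᵐ[μ] 0)
    (Ω : Set X) (hΩ_meas : MeasurableSet Ω) (hΩ_pos : 0 < μ Ω) (hΩ_fin : μ Ω < ⊤)
    (h_supp : ∀ᵐ x ∂μ, x ∉ Ω → f x = 0)
    (F : ℝ → ℝ) (hF_nonneg : ∀ l, 0 < l → 0 ≤ F l)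
    (hF_mono : ∀ a b, 0 < a → a ≤ b → F a ≤ F b)
    (hF_rc : ∀ l, 0 < l → ContinuousWithinAt F (Ici l) l)
    (Finv : ℝ → ℝ≥0∞)
    (hFinv : ∀ y, Finv y
      = sSup {t : ℝ≥0∞ | ∃ l : ℝ, 0 < l ∧ F l ≤ y ∧ t = ENNReal.ofReal l})
    (C : ℝ) (hC : 0 < C) (hC1 : C ≤ 1)
    (φ : ℝ → ℝ) (hφ_nonneg : ∀ y, 0 ≤ y → 0 ≤ φ y)
    (hφ_ge : ∀ y, 0 ≤ y →
      ENNReal.ofReal C * ENNReal.ofReal y * Finv y ≤ ENNReal.ofReal (φ y))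
    (lam0 : ℝ) (hlam0 : 0 < lam0)
    (E : ℝ) (hE : 0 < E) (hE_le : E ≤ lam0 * (eLpNorm f 2 μ).toReal ^ 2)
    (h_fk : (μ Ω).toReal * φ (1 / (2 * (μ Ω).toReal))
      ≤ 2 * E / (eLpNorm f 2 μ).toReal ^ 2) :
    1 ≤ 2 * (μ Ω).toReal * F (4 * lam0 / C) :=
  stmt_5_general μ f hf2 hf_ne Ω hΩ_pos hΩ_fin F hF_rc Finv hFinv C hC φ hφ_ge lam0 hlam0 E hE_le
    h_fk
end

section
/- Let F : ℝ → ℝ be nondecreasing and right-continuous with F(λ) = 0 for λ ≤ 0, let dF denote the associated Lebesgue–Stieltjes measure, and let ε > 0 and λ > 0. Suppose F(2u) ≥ 2(1+ε) F(u) for all u ∈ (0, λ]. Then, with G(λ) := ∫_{(0,λ]} u⁻¹ dF(u) (taken in [0,∞]), one has F(λ) ≤ λ · G(λ) ≤ (2 + ε⁻¹) · F(λ); in particular G(λ) is finite. -/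
/-!
Cut `(0, λ]` into the dyadic shells `(λ/2^(k+1), λ/2^k]`. On a shell `u⁻¹` is at most
`2^(k+1)/λ`, so by induction on the number of shells the growth condition gives
`∫_{(μ/2^N, μ]} u⁻¹ dF(u) ≤ (2 + ε⁻¹) F(μ)/μ` for every `μ ∈ (0, λ]`: the estimate for `μ/2`
plus the bound `(2/μ)(F(μ) - F(μ/2))` on the outer shell stays below `(2 + ε⁻¹) F(μ)/μ`
exactly because `F(μ) ≥ 2(1+ε) F(μ/2)`. Letting `N → ∞` gives the upper bound; the lower
bound is `u⁻¹ ≥ λ⁻¹` on `(0, λ]`.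
-/

open MeasureTheory Set ENNReal

lemma ofReal_inv_mul_measure_Ioc_le_setLIntegral {μ : Measure ℝ} {a b : ℝ} (ha : 0 ≤ a) :
    ENNReal.ofReal b⁻¹ * μ (Ioc a b) ≤ ∫⁻ u in Ioc a b, ENNReal.ofReal u⁻¹ ∂μ := by
  rw [← setLIntegral_const]
  exact setLIntegral_mono' measurableSet_Ioc fun u hu =>
    ENNReal.ofReal_le_ofReal (inv_anti₀ (ha.trans_lt hu.1) hu.2)

lemma setLIntegral_Ioc_le_ofReal_inv_mul_measure {μ : Measure ℝ} {a b : ℝ} (ha : 0 < a) :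
    ∫⁻ u in Ioc a b, ENNReal.ofReal u⁻¹ ∂μ ≤ ENNReal.ofReal a⁻¹ * μ (Ioc a b) := by
  rw [← setLIntegral_const]
  exact setLIntegral_mono' measurableSet_Ioc fun u hu =>
    ENNReal.ofReal_le_ofReal (inv_anti₀ ha hu.1.le)

lemma iUnion_Ioc_div_two_pow {b : ℝ} (hb : 0 ≤ b) :
    ⋃ N : ℕ, Ioc (b / 2 ^ N) b = Ioc 0 b := by
  ext x
  simp only [mem_iUnion, mem_Ioc]
  constructor
  · rintro ⟨N, hxN, hxb⟩
    exact ⟨(by positivity : 0 ≤ b / 2 ^ N).trans_lt hxN, hxb⟩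
  · rintro ⟨hx, hxb⟩
    obtain ⟨N, hN⟩ := pow_unbounded_of_one_lt (b / x) (one_lt_two (α := ℝ))
    exact ⟨N, (div_lt_iff₀ (by positivity)).2 (by rwa [div_lt_iff₀ hx, mul_comm] at hN), hxb⟩

lemma setLIntegral_Ioc_zero_eq_iSup {μ : Measure ℝ} (f : ℝ → ℝ≥0∞) {b : ℝ} (hb : 0 ≤ b) :
    ∫⁻ u in Ioc 0 b, f u ∂μ = ⨆ N : ℕ, ∫⁻ u in Ioc (b / 2 ^ N) b, f u ∂μ := by
  rw [← iUnion_Ioc_div_two_pow hb]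
  refine setLIntegral_iUnion_of_directed f (Monotone.directed_le fun m n hmn => ?_)
  exact Ioc_subset_Ioc_left <|
    div_le_div_of_nonneg_left hb (by positivity) (pow_le_pow_right₀ one_le_two hmn)

lemma doubling_shell_bound {ε μ x y : ℝ} (hε : 0 < ε) (hμ : 0 < μ)
    (hxy : 2 * (1 + ε) * x ≤ y) :
    (2 + ε⁻¹) * x / (μ / 2) + (μ / 2)⁻¹ * (y - x) ≤ (2 + ε⁻¹) * y / μ := by
  have key : 2 * (2 + ε⁻¹) * x + 2 * (y - x) ≤ (2 + ε⁻¹) * y := by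
    have h := mul_le_mul_of_nonneg_left hxy (inv_pos.2 hε).le
    have hexp : ε⁻¹ * (2 * (1 + ε) * x) = 2 * ε⁻¹ * x + 2 * x := by
      field_simp
    linarith
  calc (2 + ε⁻¹) * x / (μ / 2) + (μ / 2)⁻¹ * (y - x)
      = (2 * (2 + ε⁻¹) * x + 2 * (y - x)) / μ := by field_simp
    _ ≤ (2 + ε⁻¹) * y / μ := div_le_div_of_nonneg_right key hμ.le

namespace StieltjesFunction

variable (F : StieltjesFunction ℝ)

lemma nonneg_of_map_zero (hF0 : F 0 = 0) {x : ℝ} (hx : 0 ≤ x) : 0 ≤ F x :=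
  hF0 ▸ F.mono hx

lemma setLIntegral_Ioc_le {a b : ℝ} (ha : 0 < a) :
    ∫⁻ u in Ioc a b, ENNReal.ofReal u⁻¹ ∂F.measure ≤ ENNReal.ofReal (a⁻¹ * (F b - F a)) := by
  rw [ENNReal.ofReal_mul (inv_pos.2 ha).le, ← F.measure_Ioc]
  exact setLIntegral_Ioc_le_ofReal_inv_mul_measure ha

variable {F} {ε lam : ℝ}

lemma setLIntegral_Ioc_div_two_pow_le (hF0 : F 0 = 0) (hε : 0 < ε)
    (h_grow : ∀ u ∈ Ioc (0 : ℝ) lam, 2 * (1 + ε) * F u ≤ F (2 * u))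
    (N : ℕ) {μ : ℝ} (hμ : 0 < μ) (hμlam : μ ≤ lam) :
    ∫⁻ u in Ioc (μ / 2 ^ N) μ, ENNReal.ofReal u⁻¹ ∂F.measure
      ≤ ENNReal.ofReal ((2 + ε⁻¹) * F μ / μ) := by
  induction N generalizing μ with
  | zero => simp
  | succ N ih =>
    have hμ2 : 0 < μ / 2 := half_pos hμ
    have hsplit : Ioc (μ / 2 ^ (N + 1)) μ = Ioc (μ / 2 / 2 ^ N) (μ / 2) ∪ Ioc (μ / 2) μ := by
      rw [div_div, ← pow_succ', Ioc_union_Ioc_eq_Ioc _ (half_le_self hμ.le)]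
      exact div_le_div_of_nonneg_left hμ.le two_pos (le_self_pow₀ one_le_two N.succ_ne_zero)
    have hgrow : 2 * (1 + ε) * F (μ / 2) ≤ F μ := by
      simpa [mul_div_cancel₀] using h_grow (μ / 2) ⟨hμ2, by linarith⟩
    have hFμ2 : 0 ≤ F (μ / 2) := F.nonneg_of_map_zero hF0 hμ2.le
    have hCpos : 0 ≤ 2 + ε⁻¹ := by positivity
    have hshell : 0 ≤ F μ - F (μ / 2) := sub_nonneg.2 (F.mono (half_le_self hμ.le))
    rw [hsplit, lintegral_union measurableSet_Ioc (Ioc_disjoint_Ioc_of_le le_rfl)]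
    calc _ ≤ ENNReal.ofReal ((2 + ε⁻¹) * F (μ / 2) / (μ / 2))
          + ENNReal.ofReal ((μ / 2)⁻¹ * (F μ - F (μ / 2))) :=
          add_le_add (ih hμ2 (by linarith)) (F.setLIntegral_Ioc_le hμ2)
      _ = ENNReal.ofReal ((2 + ε⁻¹) * F (μ / 2) / (μ / 2) + (μ / 2)⁻¹ * (F μ - F (μ / 2))) :=
          (ENNReal.ofReal_add (by positivity) (by positivity)).symm
      _ ≤ ENNReal.ofReal ((2 + ε⁻¹) * F μ / μ) :=
          ENNReal.ofReal_le_ofReal (doubling_shell_bound hε hμ hgrow)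

lemma setLIntegral_Ioc_zero_le (hF0 : F 0 = 0) (hε : 0 < ε)
    (h_grow : ∀ u ∈ Ioc (0 : ℝ) lam, 2 * (1 + ε) * F u ≤ F (2 * u)) (hlam : 0 < lam) :
    ∫⁻ u in Ioc 0 lam, ENNReal.ofReal u⁻¹ ∂F.measure
      ≤ ENNReal.ofReal ((2 + ε⁻¹) * F lam / lam) := by
  rw [setLIntegral_Ioc_zero_eq_iSup _ hlam.le]
  exact iSup_le fun N => setLIntegral_Ioc_div_two_pow_le hF0 hε h_grow N hlam le_rfl

end StieltjesFunction

/-- Proposition 3.1 of the paper. If the nondecreasing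
right-continuous `F` (a `StieltjesFunction`) vanishes on `(-∞,0]` and satisfies
the doubling-type condition `F(2u) ≥ 2(1+ε)F(u)` on `(0,λ]`, then, with
`G(λ) = ∫_{(0,λ]} u⁻¹ dF(u)` taken in `[0,∞]`,
`F(λ) ≤ λ·G(λ) ≤ (2+ε⁻¹)·F(λ)`; in particular `G(λ)` is finite. -/
theorem stmt_8 (F : StieltjesFunction ℝ)
    (hF0 : ∀ l : ℝ, l ≤ 0 → F l = 0)
    (ε : ℝ) (hε : 0 < ε) (lam : ℝ) (hlam : 0 < lam)
    (h_grow : ∀ u ∈ Ioc (0 : ℝ) lam, 2 * (1 + ε) * F u ≤ F (2 * u)) :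
    ENNReal.ofReal (F lam)
        ≤ ENNReal.ofReal lam * ∫⁻ u in Ioc (0 : ℝ) lam, ENNReal.ofReal u⁻¹ ∂F.measure
      ∧ ENNReal.ofReal lam * ∫⁻ u in Ioc (0 : ℝ) lam, ENNReal.ofReal u⁻¹ ∂F.measure
        ≤ ENNReal.ofReal ((2 + ε⁻¹) * F lam) := by
  have hF00 : F 0 = 0 := hF0 0 le_rfl
  constructor
  · calc ENNReal.ofReal (F lam)
        = ENNReal.ofReal lam * (ENNReal.ofReal lam⁻¹ * F.measure (Ioc 0 lam)) := by
          rw [F.measure_Ioc, hF00, sub_zero, ← mul_assoc, ← ENNReal.ofReal_mul hlam.le,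
            mul_inv_cancel₀ hlam.ne', ENNReal.ofReal_one, one_mul]
      _ ≤ _ := mul_le_mul_right (ofReal_inv_mul_measure_Ioc_le_setLIntegral le_rfl) _
  · calc _ ≤ ENNReal.ofReal lam * ENNReal.ofReal ((2 + ε⁻¹) * F lam / lam) :=
          mul_le_mul_right (F.setLIntegral_Ioc_zero_le hF00 hε h_grow hlam) _
      _ = ENNReal.ofReal ((2 + ε⁻¹) * F lam) := by
          rw [← ENNReal.ofReal_mul hlam.le, mul_div_cancel₀ _ hlam.ne']
end

section
/- Let G : (0,∞) → [0,∞) be nondecreasing and let C > 0. Suppose G satisfies the exponential growth condition G(u·y) ≤ e^{Cu} · G(y) for all u, y > 0. Then for every y > 0: ∫₀^∞ e^{−u} G(u·y) du ≤ 3 · G(2C·y). -/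
/-!
For `u ≤ 2C` monotonicity gives `G(uy) ≤ G(2Cy)`, and for `u > 2C` the growth condition applied
to `uy = (u / 2C) · 2Cy` gives `G(uy) ≤ e^{u/2} G(2Cy)`. Hence `e^{-u} G(uy)` is dominated by
`(e^{-u} + e^{-u/2}) G(2Cy)`, whose integral over `(0, ∞)` is `(1 + 2) G(2Cy)`.
-/

open MeasureTheory Set ENNReal

section

open Real

theorem lintegral_ofReal_exp_mul_Ioi_zero {a : ℝ} (ha : a < 0) :
    ∫⁻ x in Ioi 0, ENNReal.ofReal (exp (a * x)) = ENNReal.ofReal (-a⁻¹) := by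
  rw [← ofReal_integral_eq_lintegral_ofReal (integrableOn_exp_mul_Ioi ha 0)
    (ae_of_all _ fun _ ↦ (exp_pos _).le), integral_exp_mul_Ioi ha, mul_zero, exp_zero,
    neg_div, one_div]

variable (G : ℝ → ℝ) (hG_mono : ∀ a b, 0 < a → a ≤ b → G a ≤ G b) {C : ℝ}
  (h_grow : ∀ u y : ℝ, 0 < u → 0 < y → G (u * y) ≤ exp (C * u) * G y)
include hG_mono h_grow

theorem le_max_of_exp_growth {t y u : ℝ} (ht : 0 < t) (hy : 0 < y) (hu : 0 < u) :
    G (u * y) ≤ max (G (t * y)) (exp (C * u / t) * G (t * y)) := by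
  rcases le_or_gt u t with hut | htu
  · exact le_max_of_le_left <|
      hG_mono _ _ (mul_pos hu hy) (mul_le_mul_of_nonneg_right hut hy.le)
  · have h := h_grow (u / t) (t * y) (div_pos hu ht) (mul_pos ht hy)
    rw [← mul_assoc, div_mul_cancel₀ _ ht.ne', ← mul_div_assoc] at h
    exact le_max_of_le_right h

theorem ofReal_exp_neg_mul_le_of_exp_growth (hC : 0 < C) {y u : ℝ} (hy : 0 < y) (hu : 0 < u) :
    ENNReal.ofReal (exp (-u) * G (u * y)) ≤
      (ENNReal.ofReal (exp (-1 * u)) + ENNReal.ofReal (exp (-2⁻¹ * u))) *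
        ENNReal.ofReal (G (2 * C * y)) := by
  set K := G (2 * C * y)
  have h := le_max_of_exp_growth G hG_mono h_grow (mul_pos two_pos hC) hy hu
  rw [show C * u / (2 * C) = 2⁻¹ * u by field_simp] at h
  have h_exp : exp (-u) * G (u * y) ≤ max (exp (-1 * u) * K) (exp (-2⁻¹ * u) * K) :=
    calc exp (-u) * G (u * y) ≤ exp (-u) * max K (exp (2⁻¹ * u) * K) :=
          mul_le_mul_of_nonneg_left h (exp_pos _).le
      _ = _ := by
          rw [mul_max_of_nonneg _ _ (exp_pos _).le, ← mul_assoc, ← exp_add]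
          ring_nf
  calc ENNReal.ofReal (exp (-u) * G (u * y))
      ≤ ENNReal.ofReal (max (exp (-1 * u) * K) (exp (-2⁻¹ * u) * K)) := ofReal_le_ofReal h_exp
    _ ≤ _ := by
        rw [ofReal_max, ofReal_mul (exp_pos _).le, ofReal_mul (exp_pos _).le, add_mul]
        exact max_le le_self_add le_add_self

end

theorem stmt_11_general (G : ℝ → ℝ)
    (hG_mono : ∀ a b, 0 < a → a ≤ b → G a ≤ G b)
    (C : ℝ) (hC : 0 < C)
    (h_grow : ∀ u y : ℝ, 0 < u → 0 < y → G (u * y) ≤ Real.exp (C * u) * G y)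
    (y : ℝ) (hy : 0 < y) :
    ∫⁻ u in Ioi (0 : ℝ), ENNReal.ofReal (Real.exp (-u) * G (u * y))
      ≤ ENNReal.ofReal (3 * G (2 * C * y)) :=
  calc ∫⁻ u in Ioi (0 : ℝ), ENNReal.ofReal (Real.exp (-u) * G (u * y))
      ≤ ∫⁻ u in Ioi (0 : ℝ), (ENNReal.ofReal (Real.exp (-1 * u)) +
          ENNReal.ofReal (Real.exp (-2⁻¹ * u))) * ENNReal.ofReal (G (2 * C * y)) :=
        setLIntegral_mono (by fun_prop) fun _ hu ↦
          ofReal_exp_neg_mul_le_of_exp_growth G hG_mono h_grow hC hy hu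
    _ = ENNReal.ofReal (1 + 2) * ENNReal.ofReal (G (2 * C * y)) := by
        rw [lintegral_mul_const _ (by fun_prop), lintegral_add_left (by fun_prop),
          lintegral_ofReal_exp_mul_Ioi_zero (by norm_num),
          lintegral_ofReal_exp_mul_Ioi_zero (by norm_num), ← ofReal_add (by norm_num) (by norm_num)]
        norm_num
    _ = ENNReal.ofReal (3 * G (2 * C * y)) := by
        rw [← ofReal_mul (by norm_num)]
        norm_num

/-- analytic core of the third bullet of Proposition 3.2.
If the nondecreasing `G : (0,∞) → [0,∞)` satisfies the exponential growth
condition `G(uy) ≤ e^{Cu} G(y)` for all `u, y > 0`, then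
`∫₀^∞ e^{−u} G(uy) du ≤ 3 G(2Cy)` for every `y > 0`. -/
theorem stmt_11 (G : ℝ → ℝ) (hG_nonneg : ∀ l, 0 < l → 0 ≤ G l)
    (hG_mono : ∀ a b, 0 < a → a ≤ b → G a ≤ G b)
    (C : ℝ) (hC : 0 < C)
    (h_grow : ∀ u y : ℝ, 0 < u → 0 < y → G (u * y) ≤ Real.exp (C * u) * G y)
    (y : ℝ) (hy : 0 < y) :
    ∫⁻ u in Ioi (0 : ℝ), ENNReal.ofReal (Real.exp (-u) * G (u * y))
      ≤ ENNReal.ofReal (3 * G (2 * C * y)) :=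
  stmt_11_general G hG_mono C hC h_grow y hy
end
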